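/- arXiv:1207.1993 — 5 statements merged into one kernel-verified Lean document; each statement's English description precedes it below -/
import Mathlib

section
/- The multivariate Gamma function factorizes: for a real number a with a > (m−1)β/2, the integral over the cone of m×m real symmetric positive definite matrices A of exp(−tr A) · (det A)^(a−(m+1)/2) dA equals π^(m(m−1)/4) · ∏_{i=1}^m Γ(a − (i−1)/2). (Real case, β = 1.) -/
/-!
Peel off the first row of `A = [[t, bᵀ], [b, S]]`. By the Schur complement, `A` is positive
definite iff `t > 0` and `S' = S - t⁻¹ b bᵀ` is, and then `det A = t det S'` and
`tr A = t + tr S' + t⁻¹ |b|²`. After the translation `S ↦ S'` the integral over `A` factors into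
the same integral in dimension `m - 1` with exponent `a - 1/2`, a Gaussian integral in `b` equal
to `(π t)^((m-1)/2)`, and the Euler integral in `t` giving `Γ(a)`. Hence
`Γ_m(a) = π^((m-1)/2) Γ(a) Γ_{m-1}(a - 1/2)`, which unrolls to the product formula.
-/

open MeasureTheory Real

/-- Index type for the independent entries of a symmetric `m × m` matrix. -/
abbrev SymIdx (m : ℕ) := { p : Fin m × Fin m // p.1 ≤ p.2 }

/-- The symmetric matrix built from its upper-triangular coordinates. -/
def symOf {m : ℕ} (x : SymIdx m → ℝ) : Matrix (Fin m) (Fin m) ℝ :=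
  fun i j => if h : i ≤ j then x ⟨(i, j), h⟩ else x ⟨(j, i), le_of_not_ge h⟩

open Matrix
open scoped ENNReal ComplexOrder

namespace Matrix

variable {𝕜 m n : Type*} [RCLike 𝕜]

theorem posDef_submatrix_equiv {M : Matrix n n 𝕜} (e : m ≃ n) :
    (M.submatrix e e).PosDef ↔ M.PosDef :=
  ⟨fun h => by simpa using h.submatrix e.symm.injective, fun h => h.submatrix e.injective⟩

theorem PosDef.of_isEmpty [IsEmpty n] (M : Matrix n n 𝕜) : M.PosDef :=
  ⟨Subsingleton.elim _ _, fun _ hx => (hx (Subsingleton.elim _ _)).elim⟩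

variable [Fintype m] [DecidableEq m] [Fintype n] [DecidableEq n]

theorem posDef_iff_posSemidef_and_det_ne_zero {M : Matrix n n 𝕜} :
    M.PosDef ↔ M.PosSemidef ∧ M.det ≠ 0 :=
  ⟨fun h => ⟨h.posSemidef, h.det_pos.ne'⟩, fun h => h.1.posDef_iff_det_ne_zero.2 h.2⟩

theorem posDef_fromBlocks₁₁_iff {A : Matrix m m 𝕜} (B : Matrix m n 𝕜) (D : Matrix n n 𝕜)
    (hA : A.PosDef) [Invertible A] :
    (fromBlocks A B Bᴴ D).PosDef ↔ (D - Bᴴ * A⁻¹ * B).PosDef := by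
  rw [posDef_iff_posSemidef_and_det_ne_zero, posDef_iff_posSemidef_and_det_ne_zero,
    hA.fromBlocks₁₁ B D, det_fromBlocks₁₁, invOf_eq_nonsing_inv, mul_ne_zero_iff,
    and_iff_right hA.det_pos.ne']

end Matrix

section Bordered

variable {m : ℕ}

def bordered (t : ℝ) (b : Fin m → ℝ) (S : Matrix (Fin m) (Fin m) ℝ) :
    Matrix (Fin (m + 1)) (Fin (m + 1)) ℝ :=
  Matrix.of (Fin.cons (Fin.cons t b) fun i => Fin.cons (b i) (S i))

def unitSumFinEquiv (m : ℕ) : Unit ⊕ Fin m ≃ Fin (m + 1) where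
  toFun := Sum.elim (fun _ => 0) Fin.succ
  invFun := Fin.cases (Sum.inl ()) Sum.inr
  left_inv s := by rcases s with _ | i <;> simp
  right_inv k := by induction k using Fin.cases <;> simp

lemma bordered_eq_submatrix_fromBlocks (t : ℝ) (b : Fin m → ℝ) (S : Matrix (Fin m) (Fin m) ℝ) :
    bordered t b S =
      (fromBlocks (diagonal fun _ => t) (replicateRow Unit b) (replicateRow Unit b)ᴴ S).submatrix
        (unitSumFinEquiv m).symm (unitSumFinEquiv m).symm := by
  ext i j
  cases i using Fin.cases <;> cases j using Fin.cases <;> simp [bordered, unitSumFinEquiv]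

lemma trace_bordered (t : ℝ) (b : Fin m → ℝ) (S : Matrix (Fin m) (Fin m) ℝ) :
    (bordered t b S).trace = t + S.trace := by
  simp [bordered, trace, Fin.sum_univ_succ]

lemma conjTranspose_replicateRow_mul_inv_diagonal_mul (t : ℝ) (b : Fin m → ℝ) :
    (replicateRow Unit b)ᴴ * (diagonal fun _ : Unit => t)⁻¹ * replicateRow Unit b =
      t⁻¹ • vecMulVec b b := by
  ext i j
  simp [Matrix.mul_apply, vecMulVec_apply, mul_comm, mul_left_comm, mul_assoc]

lemma det_bordered {t : ℝ} (ht : t ≠ 0) (b : Fin m → ℝ) (S : Matrix (Fin m) (Fin m) ℝ) :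
    (bordered t b S).det = t * (S - t⁻¹ • vecMulVec b b).det := by
  let := invertibleOfIsUnitDet (diagonal fun _ : Unit => t) (by simpa using ht)
  rw [bordered_eq_submatrix_fromBlocks, det_submatrix_equiv_self, det_fromBlocks₁₁,
    invOf_eq_nonsing_inv, conjTranspose_replicateRow_mul_inv_diagonal_mul]
  simp

lemma posDef_bordered_iff (t : ℝ) (b : Fin m → ℝ) (S : Matrix (Fin m) (Fin m) ℝ) :
    (bordered t b S).PosDef ↔ 0 < t ∧ (S - t⁻¹ • vecMulVec b b).PosDef := by
  have schur (ht : 0 < t) :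
      (bordered t b S).PosDef ↔ (S - t⁻¹ • vecMulVec b b).PosDef := by
    let := invertibleOfIsUnitDet (diagonal fun _ : Unit => t) (by simpa using ht.ne')
    rw [bordered_eq_submatrix_fromBlocks, posDef_submatrix_equiv,
      posDef_fromBlocks₁₁_iff _ _ (PosDef.diagonal fun _ => ht),
      conjTranspose_replicateRow_mul_inv_diagonal_mul]
  refine ⟨fun h => ?_, fun h => (schur h.1).2 h.2⟩
  have ht : 0 < t := by simpa [bordered] using h.diag_pos (i := 0)
  exact ⟨ht, (schur ht).1 h⟩

end Bordered

section SymCoordinates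

variable {m : ℕ}

lemma symOf_sub (x y : SymIdx m → ℝ) : symOf (x - y) = symOf x - symOf y := by
  ext i j
  by_cases h : i ≤ j <;> simp [symOf, h]

lemma continuous_symOf : Continuous (symOf : (SymIdx m → ℝ) → Matrix (Fin m) (Fin m) ℝ) := by
  refine continuous_pi fun i => continuous_pi fun j => ?_
  by_cases h : i ≤ j <;> simp only [symOf, h, dite_true, dite_false] <;> exact continuous_apply _

def symIdxSuccEquiv (m : ℕ) : SymIdx (m + 1) ≃ Fin (m + 1) ⊕ SymIdx m where
  toFun p :=
    if h : p.1.1 = 0 then Sum.inl p.1.2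
    else
      have h' : p.1.2 ≠ 0 := ((Fin.pos_iff_ne_zero.2 h).trans_le p.2).ne'
      Sum.inr ⟨(p.1.1.pred h, p.1.2.pred h'), (Fin.pred_le_pred_iff (ha := h) (hb := h')).2 p.2⟩
  invFun := Sum.elim (fun j => ⟨(0, j), Fin.zero_le _⟩)
    (fun p => ⟨(p.1.1.succ, p.1.2.succ), Fin.succ_le_succ_iff.2 p.2⟩)
  left_inv p := by
    rcases p with ⟨⟨i, j⟩, hij⟩
    rcases eq_or_ne i 0 with rfl | h <;> simp [*]
  right_inv := by
    rintro (j | ⟨⟨i, j⟩, hij⟩) <;> simp [Fin.succ_ne_zero]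

def symPack (t : ℝ) (b : Fin m → ℝ) (y : SymIdx m → ℝ) : SymIdx (m + 1) → ℝ :=
  fun s => Sum.elim (Fin.cons t b) y (symIdxSuccEquiv m s)

lemma symOf_symPack (t : ℝ) (b : Fin m → ℝ) (y : SymIdx m → ℝ) :
    symOf (symPack t b y) = bordered t b (symOf y) := by
  ext i j
  cases i using Fin.cases <;> cases j using Fin.cases <;>
    simp [symOf, symPack, symIdxSuccEquiv, bordered, Fin.succ_ne_zero]

noncomputable def symOuter (t : ℝ) (b : Fin m → ℝ) : SymIdx m → ℝ :=
  fun s => t⁻¹ * (b s.1.1 * b s.1.2)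

lemma symOf_symOuter (t : ℝ) (b : Fin m → ℝ) : symOf (symOuter t b) = t⁻¹ • vecMulVec b b := by
  ext i j
  by_cases h : i ≤ j <;> simp [symOf, symOuter, vecMulVec_apply, h, mul_comm]

lemma posDef_symOf_symPack_iff (t : ℝ) (b : Fin m → ℝ) (y : SymIdx m → ℝ) :
    (symOf (symPack t b y)).PosDef ↔ 0 < t ∧ (symOf (y - symOuter t b)).PosDef := by
  rw [symOf_symPack, posDef_bordered_iff, symOf_sub, symOf_symOuter]

noncomputable def symPackEquiv (m : ℕ) :
    (ℝ × (Fin m → ℝ)) × (SymIdx m → ℝ) ≃ᵐ (SymIdx (m + 1) → ℝ) :=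
  ((MeasurableEquiv.piFinSuccAbove (fun _ => ℝ) 0).symm.prodCongr (MeasurableEquiv.refl _)).trans
    ((MeasurableEquiv.sumPiEquivProdPi fun _ => ℝ).symm.trans
      (MeasurableEquiv.piCongrLeft (fun _ => ℝ) (symIdxSuccEquiv m).symm))

lemma symPackEquiv_apply (t : ℝ) (b : Fin m → ℝ) (y : SymIdx m → ℝ) :
    symPackEquiv m ((t, b), y) = symPack t b y := by
  ext s
  simp only [symPackEquiv, MeasurableEquiv.prodCongr, MeasurableEquiv.piFinSuccAbove,
    Fin.insertNthEquiv_zero, MeasurableEquiv.symm_mk, Equiv.symm_symm, MeasurableEquiv.refl_toEquiv,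
    MeasurableEquiv.trans_apply, MeasurableEquiv.coe_mk, Equiv.prodCongr_apply, Equiv.coe_refl,
    Prod.map_apply, id_eq, MeasurableEquiv.coe_piCongrLeft, Equiv.piCongrLeft_apply_eq_cast,
    cast_eq, symPack]
  rfl

lemma measurePreserving_symPackEquiv (m : ℕ) : MeasurePreserving (symPackEquiv m) :=
  (((volume_preserving_piFinSuccAbove (fun _ => ℝ) 0).symm _).prod (.id _)).trans
    ((volume_measurePreserving_sumPiEquivProdPi_symm _).trans
      (volume_measurePreserving_piCongrLeft _ _))

lemma lintegral_symIdx_succ {F : (SymIdx (m + 1) → ℝ) → ℝ≥0∞} (hF : Measurable F) :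
    ∫⁻ x, F x = ∫⁻ t : ℝ, ∫⁻ b : Fin m → ℝ, ∫⁻ y : SymIdx m → ℝ, F (symPack t b y) := by
  have hFe : Measurable fun q => F (symPackEquiv m q) := hF.comp (symPackEquiv m).measurable
  rw [(measurePreserving_symPackEquiv m).lintegral_map_equiv F, Measure.volume_eq_prod,
    lintegral_prod _ hFe.aemeasurable, Measure.volume_eq_prod,
    lintegral_prod _ (hFe.lintegral_prod_right').aemeasurable]
  simp only [symPackEquiv_apply]

lemma measurableSet_posDef (m : ℕ) : MeasurableSet {x : SymIdx m → ℝ | (symOf x).PosDef} := by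
  induction m with
  | zero =>
    simp only [PosDef.of_isEmpty, Set.ofPred_true, MeasurableSet.univ]
  | succ m ih =>
    rw [← (symPackEquiv m).measurableSet_preimage]
    have hset : symPackEquiv m ⁻¹' {x | (symOf x).PosDef} =
        {q | 0 < q.1.1} ∩ (fun q => q.2 - symOuter q.1.1 q.1.2) ⁻¹' {y | (symOf y).PosDef} := by
      ext ⟨⟨t, b⟩, y⟩
      simp [symPackEquiv_apply, posDef_symOf_symPack_iff]
    rw [hset]
    have hsymOuter :
        Measurable fun q : (ℝ × (Fin m → ℝ)) × (SymIdx m → ℝ) => symOuter q.1.1 q.1.2 :=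
      measurable_pi_iff.2 fun s => by unfold symOuter; fun_prop
    exact (measurableSet_lt measurable_const (by fun_prop)).inter
      ((measurable_snd.sub hsymOuter) ih)

end SymCoordinates

noncomputable def multivariateGamma (m : ℕ) (a : ℝ) : ℝ :=
  π ^ ((m * (m - 1) : ℝ) / 4) * ∏ i : Fin m, Gamma (a - (i : ℝ) / 2)

lemma multivariateGamma_pos {m : ℕ} {a : ℝ} (ha : (m - 1 : ℝ) / 2 < a) :
    0 < multivariateGamma m a := by
  refine mul_pos (rpow_pos_of_pos pi_pos _) (Finset.prod_pos fun i _ => Gamma_pos_of_pos ?_)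
  have : (i : ℝ) + 1 ≤ m := by exact_mod_cast i.isLt
  linarith

lemma multivariateGamma_succ (m : ℕ) (a : ℝ) :
    multivariateGamma (m + 1) a =
      π ^ ((m : ℝ) / 2) * Gamma a * multivariateGamma m (a - 1 / 2) := by
  have hπ : π ^ (((m + 1 : ℕ) * ((m + 1 : ℕ) - 1) : ℝ) / 4) =
      π ^ ((m : ℝ) / 2) * π ^ ((m * (m - 1) : ℝ) / 4) := by
    rw [← rpow_add pi_pos]
    push_cast
    congr 1
    ring
  have hΓ (i : Fin m) : a - ((i.succ : ℕ) : ℝ) / 2 = a - 1 / 2 - (i : ℝ) / 2 := by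
    rw [Fin.val_succ]
    push_cast
    ring
  simp only [multivariateGamma, hπ, Fin.prod_univ_succ, Fin.val_zero, hΓ, CharP.cast_eq_zero,
    zero_div, sub_zero]
  ring

lemma lintegral_ofReal_eq_of_integral_eq {α : Type*} [MeasurableSpace α] {μ : Measure α}
    {f : α → ℝ} {r : ℝ} (hf : 0 ≤ᵐ[μ] f) (h : ∫ x, f x ∂μ = r) (hr : r ≠ 0) :
    ∫⁻ x, ENNReal.ofReal (f x) ∂μ = ENNReal.ofReal r := by
  rw [← h, ofReal_integral_eq_lintegral_ofReal (Integrable.of_integral_ne_zero (h ▸ hr)) hf]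

lemma lintegral_exp_neg_mul_sum_sq (m : ℕ) {c : ℝ} (hc : 0 < c) :
    ∫⁻ b : Fin m → ℝ, ENNReal.ofReal (exp (-(c * ∑ i, b i ^ 2))) =
      ENNReal.ofReal ((π / c) ^ ((m : ℝ) / 2)) := by
  refine lintegral_ofReal_eq_of_integral_eq (ae_of_all _ fun _ => (exp_pos _).le) ?_
    (rpow_pos_of_pos (div_pos pi_pos hc) _).ne'
  rw [← (EuclideanSpace.volume_preserving_symm_measurableEquiv_toLp (Fin m)).integral_comp']
  simpa [← EuclideanSpace.real_norm_sq_eq] using GaussianFourier.integral_rexp_neg_mul_sq_norm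
    (V := EuclideanSpace ℝ (Fin m)) hc

lemma lintegral_Ioi_const_mul_GammaIntegrand (K : ℝ) (hK : 0 < K) {s : ℝ} (hs : 0 < s) :
    ∫⁻ t in Set.Ioi 0, ENNReal.ofReal (K * (exp (-t) * t ^ (s - 1))) =
      ENNReal.ofReal (K * Gamma s) := by
  refine lintegral_ofReal_eq_of_integral_eq
    (ae_restrict_of_forall_mem measurableSet_Ioi fun t (ht : 0 < t) => by positivity) ?_
    (mul_pos hK (Gamma_pos_of_pos hs)).ne'
  rw [integral_const_mul, Gamma_eq_integral hs]

lemma measurable_exp_neg_trace_mul_det_rpow (m : ℕ) (s : ℝ) :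
    Measurable fun x : SymIdx m → ℝ => exp (-(symOf x).trace) * (symOf x).det ^ s :=
  continuous_symOf.matrix_trace.neg.rexp.measurable.mul
    (continuous_symOf.matrix_det.measurable.pow_const s)

noncomputable def gammaDensity (m : ℕ) (c : ℝ) (x : SymIdx m → ℝ) : ℝ≥0∞ :=
  {x : SymIdx m → ℝ | (symOf x).PosDef}.indicator
    (fun x => ENNReal.ofReal (exp (-(symOf x).trace) * (symOf x).det ^ (c - (m + 1 : ℝ) / 2))) x

lemma measurable_gammaDensity (m : ℕ) (c : ℝ) : Measurable (gammaDensity m c) :=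
  (measurable_exp_neg_trace_mul_det_rpow m _).ennreal_ofReal.indicator (measurableSet_posDef m)

lemma gammaDensity_symPack {m : ℕ} (c t : ℝ) (b : Fin m → ℝ) (y : SymIdx m → ℝ) :
    gammaDensity (m + 1) c (symPack t b y) =
      (Set.Ioi 0).indicator (fun t => ENNReal.ofReal (exp (-t) * t ^ (c - (m + 2 : ℝ) / 2))) t *
        ENNReal.ofReal (exp (-(t⁻¹ * ∑ i, b i ^ 2))) *
        gammaDensity m (c - 1 / 2) (y - symOuter t b) := by
  classical
  simp only [gammaDensity, Set.indicator_apply, Set.mem_ofPred_eq, posDef_symOf_symPack_iff,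
    Set.mem_Ioi]
  by_cases ht : 0 < t
  swap
  · simp [ht]
  by_cases hz : (symOf (y - symOuter t b)).PosDef
  swap
  · simp [ht, hz]
  set z := y - symOuter t b
  have hy : symOf y = symOf z + t⁻¹ • vecMulVec b b := by
    rw [symOf_sub, symOf_symOuter, sub_add_cancel]
  have htrace : (symOf (symPack t b y)).trace = t + (symOf z).trace + t⁻¹ * ∑ i, b i ^ 2 := by
    rw [symOf_symPack, trace_bordered, hy, trace_add, trace_smul, trace_vecMulVec]
    simp [dotProduct, sq, add_assoc]
  have hdet : (symOf (symPack t b y)).det = t * (symOf z).det := by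
    rw [symOf_symPack, det_bordered ht.ne', hy, add_sub_cancel_right]
  rw [if_pos ⟨ht, hz⟩, if_pos ht, if_pos hz, htrace, hdet, ← ENNReal.ofReal_mul (by positivity),
    ← ENNReal.ofReal_mul (by positivity), mul_rpow ht.le hz.det_pos.le]
  congr 1
  have hexp : c - ((m + 1 : ℕ) + 1 : ℝ) / 2 = c - 1 / 2 - (m + 1 : ℝ) / 2 := by push_cast; ring
  rw [hexp, show c - (m + 2 : ℝ) / 2 = c - 1 / 2 - (m + 1 : ℝ) / 2 by ring, neg_add, neg_add,
    exp_add, exp_add]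
  ring

-- The trailing factor `P` lets `simp_rw` apply this under the integral over `t`.
lemma lintegral_gaussian_slice (m : ℕ) (c t : ℝ) (P : ℝ≥0∞) :
    ∫⁻ b : Fin m → ℝ,
        (Set.Ioi 0).indicator (fun t => ENNReal.ofReal (exp (-t) * t ^ (c - (m + 2 : ℝ) / 2))) t *
          ENNReal.ofReal (exp (-(t⁻¹ * ∑ i, b i ^ 2))) * P =
      (Set.Ioi 0).indicator
        (fun t => ENNReal.ofReal (π ^ ((m : ℝ) / 2) * (exp (-t) * t ^ (c - 1)))) t * P := by
  rw [lintegral_mul_const _ (by fun_prop), lintegral_const_mul _ (by fun_prop)]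
  by_cases ht : 0 < t
  swap
  · simp [ht]
  rw [Set.indicator_of_mem (Set.mem_Ioi.2 ht), Set.indicator_of_mem (Set.mem_Ioi.2 ht),
    lintegral_exp_neg_mul_sum_sq m (inv_pos.2 ht), ← ENNReal.ofReal_mul (by positivity),
    div_inv_eq_mul, mul_rpow pi_pos.le ht.le]
  congr 2
  have : t ^ (c - 1) = t ^ (c - (m + 2 : ℝ) / 2) * t ^ ((m : ℝ) / 2) := by
    rw [← rpow_add ht]
    ring_nf
  rw [this]
  ring

lemma lintegral_gammaDensity_succ (m : ℕ) {c : ℝ} (hc : 0 < c) :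
    ∫⁻ x, gammaDensity (m + 1) c x =
      ENNReal.ofReal (π ^ ((m : ℝ) / 2) * Gamma c) * ∫⁻ y, gammaDensity m (c - 1 / 2) y := by
  have hG (v : SymIdx m → ℝ) : Measurable fun y => gammaDensity m (c - 1 / 2) (y - v) :=
    (measurable_gammaDensity _ _).comp (measurable_sub_const v)
  rw [lintegral_symIdx_succ (measurable_gammaDensity _ _)]
  simp_rw [gammaDensity_symPack, lintegral_const_mul _ (hG _), lintegral_sub_right_eq_self,
    lintegral_gaussian_slice]
  rw [lintegral_mul_const _ ((by fun_prop : Measurable _).indicator measurableSet_Ioi),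
    lintegral_indicator measurableSet_Ioi,
    lintegral_Ioi_const_mul_GammaIntegrand _ (by positivity) hc]

theorem lintegral_gammaDensity (m : ℕ) {a : ℝ} (ha : (m - 1 : ℝ) / 2 < a) :
    ∫⁻ x, gammaDensity m a x = ENNReal.ofReal (multivariateGamma m a) := by
  induction m generalizing a with
  | zero =>
    simp [gammaDensity, multivariateGamma, PosDef.of_isEmpty, Measure.volume_pi_eq_dirac 0]
  | succ m ih =>
    push_cast at ha
    have ha0 : 0 < a := by linarith [(m.cast_nonneg : (0 : ℝ) ≤ m)]
    rw [lintegral_gammaDensity_succ m ha0, ih (by linarith),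
      ← ENNReal.ofReal_mul (by positivity [Gamma_pos_of_pos ha0]), multivariateGamma_succ]

theorem stmt_2 (m : ℕ) (a : ℝ) (ha : (m - 1 : ℝ) / 2 < a) :
    ∫ x : SymIdx m → ℝ in {x | (symOf x).PosDef},
        Real.exp (-(symOf x).trace) * (symOf x).det ^ (a - (m + 1 : ℝ) / 2)
    = Real.pi ^ ((m * (m - 1) : ℝ) / 4) *
        ∏ i : Fin m, Real.Gamma (a - (i : ℝ) / 2) := by
  have hS := measurableSet_posDef m
  rw [integral_eq_lintegral_of_nonneg_ae
      (ae_restrict_of_forall_mem hS fun x hx => by positivity [hx.det_pos])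
      (measurable_exp_neg_trace_mul_det_rpow m _).aestronglyMeasurable, ← lintegral_indicator hS]
  change (∫⁻ x, gammaDensity m a x).toReal = multivariateGamma m a
  rw [lintegral_gammaDensity m ha, ENNReal.toReal_ofReal (multivariateGamma_pos ha).le]
end

section
/- Change of variables for congruence transformation (real nonsingular case): the linear map S ↦ Bᵀ S B on the space of m×m real symmetric matrices, for fixed invertible B, has determinant of absolute value |det B|^(m+1); hence the Jacobian of X = Bᵀ Y B is |det B|^(m+1). -/
/-!
The map `B ↦ det (S ↦ Bᵀ S B)` is multiplicative, so by the reduction of `B` to transvections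
and a diagonal matrix it suffices to treat these two cases. For a transvection `1 + E`, `E`
nilpotent, the map `S ↦ (1 + E)ᵀ S (1 + E)` is unipotent, so its determinant is `1`. For
`D = diag d` the map is diagonal in the coordinates `S i j`, `i ≤ j`, with eigenvalues `d i * d j`;
every index occurs `m + 1` times in these pairs (twice in `(i, i)`), so the product of the
eigenvalues is `(det D) ^ (m + 1)`.
-/

open Matrix Finset

theorem LinearMap.det_one_add_of_isNilpotent {K V : Type*} [Field K] [AddCommGroup V]
    [Module K V] [FiniteDimensional K V] {f : Module.End K V} (hf : IsNilpotent f) :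
    LinearMap.det (1 + f) = 1 := by
  have h := LinearMap.eval_charpoly (-f) 1
  rw [hf.neg.charpoly_eq_X_pow_finrank, map_one, sub_neg_eq_add] at h
  simpa using h.symm

section PairCounting

variable {M : Type*} [CommMonoid M] {n : Type*} [Fintype n] [LinearOrder n]

lemma Fintype.card_filter_ge_add_card_filter_le (i : n) :
    #{j | i ≤ j} + #{j | j ≤ i} = Fintype.card n + 1 := by
  rw [← card_union_add_card_inter, ← card_univ, ← card_singleton i]
  congr 2
  · ext j; simpa using le_total i j
  · ext j; simpa using le_antisymm_iff.symm.trans eq_comm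

lemma Fintype.prod_le_pairs_mul_eq_pow (f : n → M) :
    ∏ p : {p : n × n // p.1 ≤ p.2}, f p.1.1 * f p.1.2 = (∏ i, f i) ^ (Fintype.card n + 1) := by
  have hsplit : ∀ i j : n, (if i ≤ j then f i * f j else 1) =
      (if i ≤ j then f i else 1) * (if i ≤ j then f j else 1) := by
    intro i j; split_ifs <;> simp
  rw [← prod_subtype {p : n × n | p.1 ≤ p.2} (by simp) (fun p => f p.1 * f p.2), prod_filter,
    ← univ_product_univ, prod_product]
  simp_rw [hsplit, prod_mul_distrib]
  rw [prod_comm (f := fun i j => if i ≤ j then f j else 1)]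
  simp_rw [← prod_filter, prod_const, ← prod_mul_distrib, ← pow_add,
    Fintype.card_filter_ge_add_card_filter_le, prod_pow]

end PairCounting

namespace Matrix

section Congruence

variable {R : Type*} [CommRing R] {n : Type*} [Fintype n]

def congruence (B : Matrix n n R) : Module.End R (Matrix n n R) :=
  LinearMap.mulLeft R Bᵀ ∘ₗ LinearMap.mulRight R B

@[simp] lemma congruence_apply (B S : Matrix n n R) : congruence B S = Bᵀ * S * B :=
  (Matrix.mul_assoc _ _ _).symm

lemma isNilpotent_congruence_one_add_sub_one [DecidableEq n] {E : Matrix n n R}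
    (hE : IsNilpotent E) : IsNilpotent (congruence (1 + E) - 1) := by
  set ℓ := LinearMap.mulLeft R Eᵀ
  set r := LinearMap.mulRight R E
  have hℓ : IsNilpotent ℓ := by
    obtain ⟨k, hk⟩ := isNilpotent_transpose_iff.2 hE
    exact ⟨k, by simp [ℓ, LinearMap.pow_mulLeft, hk]⟩
  have hr : IsNilpotent r := by
    obtain ⟨k, hk⟩ := hE
    exact ⟨k, by simp [r, LinearMap.pow_mulRight, hk]⟩
  have hℓr : Commute ℓ r := LinearMap.commute_mulLeft_right _ _
  have hexpand : congruence (1 + E) - 1 = ℓ + r + ℓ * r := by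
    ext S : 1
    simp only [congruence_apply, transpose_add, transpose_one, LinearMap.sub_apply,
      LinearMap.add_apply, Module.End.mul_apply, Module.End.one_apply, ℓ, r,
      LinearMap.mulLeft_apply, LinearMap.mulRight_apply]
    noncomm_ring
  have hcomm : Commute (ℓ + r) (ℓ * r) :=
    ((Commute.refl ℓ).mul_right hℓr).add_left (hℓr.symm.mul_right (Commute.refl r))
  rw [hexpand]
  exact hcomm.isNilpotent_add (hℓr.isNilpotent_add hℓ hr) (hℓr.isNilpotent_mul_right hℓ)

end Congruence

section SymmCongr

variable {R : Type*} [CommRing R] [StarRing R] [TrivialStar R] {n : Type*} [Fintype n]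

omit [Fintype n] in
lemma mem_selfAdjoint_submodule_iff {S : Matrix n n R} :
    S ∈ selfAdjoint.submodule R (Matrix n n R) ↔ Sᵀ = S := by
  rw [← conjTranspose_eq_transpose_of_trivial]
  exact Iff.rfl

lemma congruence_mapsTo_selfAdjoint (B : Matrix n n R) :
    Set.MapsTo (congruence B) (selfAdjoint.submodule R (Matrix n n R))
      (selfAdjoint.submodule R (Matrix n n R)) := fun S hS => by
  simp only [SetLike.mem_coe, mem_selfAdjoint_submodule_iff] at hS ⊢
  simp [Matrix.mul_assoc, hS]

def symmCongr (B : Matrix n n R) : Module.End R (selfAdjoint.submodule R (Matrix n n R)) :=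
  (congruence B).restrict (congruence_mapsTo_selfAdjoint B)

@[simp] lemma coe_symmCongr_apply (B : Matrix n n R)
    (S : selfAdjoint.submodule R (Matrix n n R)) :
    (symmCongr B S : Matrix n n R) = Bᵀ * S * B :=
  congruence_apply B S

lemma symmCongr_mul (A B : Matrix n n R) : symmCongr (A * B) = symmCongr B * symmCongr A := by
  ext S : 2
  simp [Matrix.mul_assoc]

variable [LinearOrder n]

@[simps]
def selfAdjointEquivUpper :
    selfAdjoint.submodule R (Matrix n n R) ≃ₗ[R] ({p : n × n // p.1 ≤ p.2} → R) where
  toFun S p := (S : Matrix n n R) p.1.1 p.1.2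
  map_add' _ _ := rfl
  map_smul' _ _ := rfl
  invFun f := ⟨of fun i j => f ⟨(min i j, max i j), min_le_max⟩,
    mem_selfAdjoint_submodule_iff.2 <| by ext i j; simp [min_comm, max_comm]⟩
  left_inv S := by
    have hS := mem_selfAdjoint_submodule_iff.1 S.2
    ext i j
    rcases le_total i j with h | h
    · simp [h]
    · simpa [h] using congrFun (congrFun hS i) j
  right_inv f := by
    ext p
    simp [p.2]

lemma conj_symmCongr_diagonal (d : n → R) :
    selfAdjointEquivUpper.conj (symmCongr (diagonal d)) =
      toLin' (diagonal fun p : {p : n × n // p.1 ≤ p.2} => d p.1.1 * d p.1.2) := by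
  refine LinearMap.ext fun f => funext fun p => ?_
  simp [LinearEquiv.conj_apply, mulVec_diagonal, p.2]
  ring

end SymmCongr

section Determinant

variable {K : Type*} [Field K] [StarRing K] [TrivialStar K] {n : Type*} [Fintype n]

lemma det_symmCongr_one_add_of_isNilpotent [DecidableEq n] {E : Matrix n n K}
    (hE : IsNilpotent E) :
    LinearMap.det (symmCongr (1 + E)) = 1 := by
  have hN : ∀ S ∈ selfAdjoint.submodule K (Matrix n n K),
      (congruence (1 + E) - 1 : Module.End K (Matrix n n K)) S ∈
        selfAdjoint.submodule K (Matrix n n K) := fun S hS =>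
    sub_mem (congruence_mapsTo_selfAdjoint _ hS) hS
  have hunipotent : symmCongr (1 + E) = 1 + (congruence (1 + E) - 1).restrict hN := by
    ext S : 2
    simp [LinearMap.restrict_apply]
  rw [hunipotent]
  exact LinearMap.det_one_add_of_isNilpotent
    (Module.End.isNilpotent.restrict hN (isNilpotent_congruence_one_add_sub_one hE))

lemma det_symmCongr_transvection [DecidableEq n] (t : TransvectionStruct n K) :
    LinearMap.det (symmCongr t.toMatrix) = 1 :=
  det_symmCongr_one_add_of_isNilpotent ⟨2, by simp [sq, t.hij.symm]⟩

variable [LinearOrder n]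

lemma det_symmCongr_diagonal (d : n → K) :
    LinearMap.det (symmCongr (diagonal d)) = (∏ i, d i) ^ (Fintype.card n + 1) := by
  have h := congrArg LinearMap.det (conj_symmCongr_diagonal d)
  rw [LinearEquiv.conj_apply, LinearMap.comp_assoc, LinearMap.det_conj, LinearMap.det_toLin',
    det_diagonal] at h
  rw [h, Fintype.prod_le_pairs_mul_eq_pow]

theorem det_symmCongr (B : Matrix n n K) :
    LinearMap.det (symmCongr B) = B.det ^ (Fintype.card n + 1) := by
  refine diagonal_transvection_induction
    (fun B => LinearMap.det (symmCongr B) = B.det ^ (Fintype.card n + 1)) B ?_ ?_ ?_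
  · intro d _
    rw [det_symmCongr_diagonal, det_diagonal]
  · intro t
    rw [det_symmCongr_transvection, TransvectionStruct.det, one_pow]
  · intro A B hA hB
    rw [symmCongr_mul, map_mul, hA, hB, det_mul, mul_pow, mul_comm]

end Determinant

end Matrix

theorem stmt_7_general (m : ℕ) (B : Matrix (Fin m) (Fin m) ℝ)
    (T : selfAdjoint (Matrix (Fin m) (Fin m) ℝ) →ₗ[ℝ]
         selfAdjoint (Matrix (Fin m) (Fin m) ℝ))
    (hT : ∀ S : selfAdjoint (Matrix (Fin m) (Fin m) ℝ),
      (T S : Matrix (Fin m) (Fin m) ℝ) = Bᵀ * (S : Matrix (Fin m) (Fin m) ℝ) * B) :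
    |LinearMap.det T| = |B.det| ^ (m + 1) := by
  -- `selfAdjoint.submodule` has carrier `selfAdjoint`, so both maps live on the same type up to
  -- definitional unfolding.
  have hT' : T = symmCongr B :=
    LinearMap.ext fun S => Subtype.ext ((hT S).trans (coe_symmCongr_apply B S).symm)
  have hdet : LinearMap.det T = B.det ^ (Fintype.card (Fin m) + 1) := hT' ▸ det_symmCongr B
  rw [hdet, Fintype.card_fin, abs_pow]

theorem stmt_7 (m : ℕ) (B : Matrix (Fin m) (Fin m) ℝ) (hB : B.det ≠ 0)
    (T : selfAdjoint (Matrix (Fin m) (Fin m) ℝ) →ₗ[ℝ]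
         selfAdjoint (Matrix (Fin m) (Fin m) ℝ))
    (hT : ∀ S : selfAdjoint (Matrix (Fin m) (Fin m) ℝ),
      (T S : Matrix (Fin m) (Fin m) ℝ) = Bᵀ * (S : Matrix (Fin m) (Fin m) ℝ) * B) :
    |LinearMap.det T| = |B.det| ^ (m + 1) :=
  stmt_7_general m B T hT
end

section
/- Change of variables for complex congruence transformation: for fixed invertible complex m×m matrix B, the real-linear map S ↦ B* S B on the real vector space of m×m complex Hermitian matrices has determinant of absolute value |det B|^(2m). -/
/-!
Writing `X = H + i K` with `H, K` Hermitian identifies the complex matrices with two copies of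
`Herm(m)`, and the ℂ-linear map `Φ X = B* X B` acts on both copies by `T`. Hence the real
determinant of `Φ` is `(det T)²`; it is also the norm `|det_ℂ Φ|²`, and `det_ℂ Φ` is computed from
the Kronecker product `B* ⊗ Bᵀ` as `conj (det B) ^ m * det B ^ m`.
-/

open Matrix Complex ComplexStarModule
open scoped Kronecker

namespace Matrix

variable {n R : Type*} [Fintype n] [DecidableEq n] [CommRing R]

theorem det_mulLeftRight (A B : Matrix n n R) :
    LinearMap.det (LinearMap.mulLeftRight R (A, B) : Matrix n n R →ₗ[R] Matrix n n R) =
      A.det ^ Fintype.card n * B.det ^ Fintype.card n := by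
  let e : Matrix n n R ≃ₗ[R] (n × n → R) :=
    (ofLinearEquiv R).symm.trans (LinearEquiv.curry R R n n).symm
  have hconj : (e : Matrix n n R →ₗ[R] _) ∘ₗ LinearMap.mulLeftRight R (A, B) ∘ₗ
      (e.symm : _ →ₗ[R] Matrix n n R) = toLin' (A ⊗ₖ Bᵀ) := by
    refine LinearMap.ext fun X => ?_
    -- `e Y` is the vectorization of `Yᵀ`
    change vec (A * e.symm X * B)ᵀ = (A ⊗ₖ Bᵀ) *ᵥ vec (e.symm X)ᵀ
    rw [kronecker_mulVec_vec, transpose_mul, transpose_mul, Matrix.mul_assoc]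
  rw [← LinearMap.det_conj _ e, hconj, LinearMap.det_toLin', det_kronecker, det_transpose]

end Matrix

namespace ComplexStarModule

variable {A : Type*} [AddCommGroup A] [Module ℂ A] [StarAddMonoid A] [StarModule ℂ A]

variable (A) in
noncomputable def reImEquiv : A ≃ₗ[ℝ] selfAdjoint A × selfAdjoint A where
  __ := realPart.prod imaginaryPart
  invFun p := p.1 + I • (p.2 : A)
  left_inv := realPart_add_I_smul_imaginaryPart
  right_inv p := by ext <;> simp

@[simp] lemma reImEquiv_apply (x : A) : reImEquiv A x = (ℜ x, ℑ x) := rfl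

@[simp] lemma reImEquiv_symm_apply (p : selfAdjoint A × selfAdjoint A) :
    (reImEquiv A).symm p = p.1 + I • (p.2 : A) := rfl

instance [Module.Finite ℂ A] : Module.Finite ℝ (selfAdjoint A) :=
  have := Module.Finite.trans (R := ℝ) ℂ A
  Module.Finite.of_surjective realPart realPart_surjective

section Restriction

variable (Φ : A →ₗ[ℂ] A) (T : selfAdjoint A →ₗ[ℝ] selfAdjoint A)

lemma reImEquiv_conj_restrictScalars (hT : ∀ S, (T S : A) = Φ S) :
    (reImEquiv A : A →ₗ[ℝ] _) ∘ₗ Φ.restrictScalars ℝ ∘ₗ ((reImEquiv A).symm : _ →ₗ[ℝ] A) =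
      T.prodMap T := by
  refine LinearMap.ext fun ⟨S₁, S₂⟩ => ?_
  have : Φ (S₁ + I • (S₂ : A)) = T S₁ + I • (T S₂ : A) := by rw [map_add, map_smul, hT, hT]
  simp [this]

lemma det_restrictScalars_eq_sq [Module.Finite ℂ A] (hT : ∀ S, (T S : A) = Φ S) :
    LinearMap.det (Φ.restrictScalars ℝ) = LinearMap.det T ^ 2 := by
  rw [← LinearMap.det_conj _ (reImEquiv A), reImEquiv_conj_restrictScalars Φ T hT,
    LinearMap.det_prodMap, sq]

lemma det_sq_eq_normSq_det [Module.Finite ℂ A] (hT : ∀ S, (T S : A) = Φ S) :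
    LinearMap.det T ^ 2 = normSq (LinearMap.det Φ) := by
  rw [← det_restrictScalars_eq_sq Φ T hT, LinearMap.det_restrictScalars,
    Algebra.norm_complex_apply]

end Restriction

end ComplexStarModule

theorem stmt_8_general (m : ℕ) (B : Matrix (Fin m) (Fin m) ℂ)
    (T : selfAdjoint (Matrix (Fin m) (Fin m) ℂ) →ₗ[ℝ]
         selfAdjoint (Matrix (Fin m) (Fin m) ℂ))
    (hT : ∀ S : selfAdjoint (Matrix (Fin m) (Fin m) ℂ),
      (T S : Matrix (Fin m) (Fin m) ℂ) = Bᴴ * (S : Matrix (Fin m) (Fin m) ℂ) * B) :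
    |LinearMap.det T| = ‖B.det‖ ^ (2 * m) := by
  have hsq : LinearMap.det T ^ 2 = (‖B.det‖ ^ (2 * m)) ^ 2 := by
    rw [det_sq_eq_normSq_det (LinearMap.mulLeftRight ℂ (Bᴴ, B)) T hT, det_mulLeftRight,
      det_conjTranspose, Fintype.card_fin, map_mul, map_pow, map_pow, star_def, normSq_conj,
      normSq_eq_norm_sq]
    ring
  rwa [sq_eq_sq_iff_abs_eq_abs, abs_of_nonneg (by positivity : (0 : ℝ) ≤ ‖B.det‖ ^ (2 * m))]
    at hsq

theorem stmt_8 (m : ℕ) (B : Matrix (Fin m) (Fin m) ℂ) (hB : B.det ≠ 0)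
    (T : selfAdjoint (Matrix (Fin m) (Fin m) ℂ) →ₗ[ℝ]
         selfAdjoint (Matrix (Fin m) (Fin m) ℂ))
    (hT : ∀ S : selfAdjoint (Matrix (Fin m) (Fin m) ℂ),
      (T S : Matrix (Fin m) (Fin m) ℂ) = Bᴴ * (S : Matrix (Fin m) (Fin m) ℂ) * B) :
    |LinearMap.det T| = ‖B.det‖ ^ (2 * m) :=
  stmt_8_general m B T hT
end

section
/- Right multiplication Jacobian, complex case: for a fixed invertible m×m complex matrix B, the real-linear map Z ↦ Z B from n×m complex matrices to themselves has real determinant of absolute value |det B|^(2n). -/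
/-!
`T` is the ℂ-linear map `Z ↦ Z * B` with scalars restricted to ℝ, so its real determinant is the
norm `N_{ℂ/ℝ} = |·|²` of its complex determinant. Over ℂ, `Z ↦ Z * B` acts on each of the `n` rows
of `Z` by `v ↦ v ᵥ* B`, so its determinant is `det B ^ n`.
-/

open Matrix

namespace Matrix

variable {ι κ R : Type*} [Fintype ι] [Fintype κ] [DecidableEq κ] [CommRing R]

theorem det_vecMulLinear (B : Matrix κ κ R) : LinearMap.det B.vecMulLinear = B.det := by
  rw [← det_transpose, ← LinearMap.det_toLin']
  congr 1
  ext v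
  simp

theorem det_mulRightLinearMap (B : Matrix κ κ R) :
    LinearMap.det (mulRightLinearMap ι R B) = B.det ^ Fintype.card ι := by
  -- `Matrix ι κ R` is `ι → κ → R` and `Z * B` acts rowwise, so `hrows` is the claim up to defeq
  have hrows := LinearMap.det_pi (ι := ι) fun _ => B.vecMulLinear
  rw [Finset.prod_const, Finset.card_univ, det_vecMulLinear] at hrows
  exact hrows

end Matrix

theorem stmt_10_general (n m : ℕ) (B : Matrix (Fin m) (Fin m) ℂ)
    (T : Matrix (Fin n) (Fin m) ℂ →ₗ[ℝ] Matrix (Fin n) (Fin m) ℂ)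
    (hT : ∀ Z, T Z = Z * B) :
    |LinearMap.det T| = ‖B.det‖ ^ (2 * n) := by
  have hTB : T = (mulRightLinearMap (Fin n) ℂ B).restrictScalars ℝ := LinearMap.ext hT
  rw [hTB, LinearMap.det_restrictScalars, Algebra.norm_complex_apply, det_mulRightLinearMap,
    Fintype.card_fin, map_pow, Complex.normSq_eq_norm_sq, ← pow_mul, mul_comm]
  exact abs_of_nonneg (by positivity)

theorem stmt_10 (n m : ℕ) (B : Matrix (Fin m) (Fin m) ℂ) (hB : IsUnit B.det)
    (T : Matrix (Fin n) (Fin m) ℂ →ₗ[ℝ] Matrix (Fin n) (Fin m) ℂ)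
    (hT : ∀ Z, T Z = Z * B) :
    |LinearMap.det T| = ‖B.det‖ ^ (2 * n) :=
  stmt_10_general n m B T hT
end

section
/- Pseudo-determinant relation under rank-preserving congruence: if Y = H₁ Λ H₁ᵀ with H₁ m×n having orthonormal columns and Λ diagonal positive, and B is invertible m×m, and X = Bᵀ Y B has spectral form X = G₁ Δ G₁ᵀ (G₁ m×n orthonormal columns, Δ diagonal positive), then ∏ᵢ δᵢ = det(H₁ᵀ B G₁) · det(G₁ᵀ Bᵀ H₁) · ∏ᵢ λᵢ. -/
open Matrix

theorem Matrix.eq_transpose_mul_mul_of_mul_mul_transpose_eq {R m n : Type*} [CommRing R]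
    [Fintype m] [Fintype n] [DecidableEq n] {G : Matrix m n R} (hG : Gᵀ * G = 1)
    {D : Matrix n n R} {M : Matrix m m R} (h : G * D * Gᵀ = M) :
    D = Gᵀ * M * G := by
  rw [← h, Matrix.mul_assoc, Matrix.mul_assoc, hG, Matrix.mul_one, ← Matrix.mul_assoc, hG,
    Matrix.one_mul]

theorem stmt_18_general (m n : ℕ)
    (H₁ G₁ : Matrix (Fin m) (Fin n) ℝ)
    (hG : G₁ᵀ * G₁ = 1)
    (lam δ : Fin n → ℝ)
    (B : Matrix (Fin m) (Fin m) ℝ)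
    (hcong : G₁ * Matrix.diagonal δ * G₁ᵀ
      = Bᵀ * (H₁ * Matrix.diagonal lam * H₁ᵀ) * B) :
    (Matrix.diagonal δ).det
      = (H₁ᵀ * B * G₁).det * (G₁ᵀ * Bᵀ * H₁).det * (Matrix.diagonal lam).det := by
  have hδ : Matrix.diagonal δ
      = (G₁ᵀ * Bᵀ * H₁) * Matrix.diagonal lam * (H₁ᵀ * B * G₁) := by
    rw [eq_transpose_mul_mul_of_mul_mul_transpose_eq hG hcong]
    simp only [Matrix.mul_assoc]
  rw [hδ, det_mul, det_mul]
  ring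

theorem stmt_18 (m n : ℕ)
    (H₁ G₁ : Matrix (Fin m) (Fin n) ℝ)
    (hH : H₁ᵀ * H₁ = 1) (hG : G₁ᵀ * G₁ = 1)
    (lam δ : Fin n → ℝ) (hlam : ∀ i, 0 < lam i) (hδ : ∀ i, 0 < δ i)
    (B : Matrix (Fin m) (Fin m) ℝ) (hB : IsUnit B.det)
    (hcong : G₁ * Matrix.diagonal δ * G₁ᵀ
      = Bᵀ * (H₁ * Matrix.diagonal lam * H₁ᵀ) * B) :
    (Matrix.diagonal δ).det
      = (H₁ᵀ * B * G₁).det * (G₁ᵀ * Bᵀ * H₁).det * (Matrix.diagonal lam).det :=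
  stmt_18_general m n H₁ G₁ hG lam δ B hcong
end
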